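/- Let M be a random s×s Bernoulli(√2/2) matrix over 𝔽₂. Let two 2×2 submatrices of M (determined by row pairs {i₁,j₁}, {i₂,j₂} and column pairs {k₁,l₁}, {k₂,l₂}) share exactly one common entry position. Then the event that the first submatrix is invertible over 𝔽₂ and the event that the second submatrix is invertible over 𝔽₂ are independent, each having probability 1/2. -/

import Mathlib

open scoped Classical

noncomputable section

/-- The 2×2 submatrix of `M` on rows `i, j` and columns `k, l`. -/
def sub2 {s : ℕ} (M : Matrix (Fin s) (Fin s) (ZMod 2)) (i j k l : Fin s) :
    Matrix (Fin 2) (Fin 2) (ZMod 2) := !![M i k, M i l; M j k, M j l]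

/-- `N2 M` is the number of invertible 2×2 submatrices of `M`, i.e. the number of
quadruples `(i, j, k, l)` with `i < j`, `k < l` such that the 2×2 submatrix of `M`
on rows `i, j` and columns `k, l` is invertible over `𝔽₂`. -/
def N2 {s : ℕ} (M : Matrix (Fin s) (Fin s) (ZMod 2)) : ℕ :=
  (Finset.univ.filter (fun q : Fin s × Fin s × Fin s × Fin s =>
    q.1 < q.2.1 ∧ q.2.2.1 < q.2.2.2 ∧ IsUnit (sub2 M q.1 q.2.1 q.2.2.1 q.2.2.2))).card


/-- The probability of a given matrix `M` under the Bernoulli(p) distribution in which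
all entries are mutually independent, each equal to 1 with probability `p`. -/
def bernoulliProb {s : ℕ} (p : ℝ) (M : Matrix (Fin s) (Fin s) (ZMod 2)) : ℝ :=
  ∏ i : Fin s, ∏ j : Fin s, if M i j = 1 then p else 1 - p

/-- The probability of an event `E` on `s × s` matrices over `𝔽₂` under the
Bernoulli(p) distribution. -/
def eventProb (s : ℕ) (p : ℝ) (E : Matrix (Fin s) (Fin s) (ZMod 2) → Prop) : ℝ :=
  ∑ M ∈ Finset.univ.filter (fun M => E M), bernoulliProb p M


/-!
Let `x = M r c` be the shared entry. Each minor has determinant `x * a₂ - a₀ * a₁` in its three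
private entries `a`; since `a₀ * a₁ = 1` with probability `p² = 1 / 2`, this determinant is uniform
on `𝔽₂` whatever `x * a₂` is, so each minor is invertible with probability `1 / 2` given `x`.
Given `x`, the two minors depend on disjoint sets of entries, hence the joint probability is
`∑ₓ P(x) * (1 / 2) * (1 / 2) = 1 / 4`.
-/

theorem Finset.pair_eq_pair_iff {α : Type*} [DecidableEq α] {a b c d : α} :
    ({a, b} : Finset α) = {c, d} ↔ a = c ∧ b = d ∨ a = d ∧ b = c := by
  rw [← Finset.coe_inj, Finset.coe_pair, Finset.coe_pair, Set.pair_eq_pair_iff]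

theorem exists_eq_pair_of_card_inter_eq_one {α : Type*} [DecidableEq α] {a b c d : α}
    (hab : a ≠ b) (hcd : c ≠ d) (h : ({a, b} ∩ {c, d} : Finset α).card = 1) :
    ∃ r x y, r ≠ x ∧ r ≠ y ∧ x ≠ y ∧
      ({a, b} : Finset α) = {r, x} ∧ ({c, d} : Finset α) = {r, y} := by
  obtain ⟨r, hr⟩ := Finset.card_eq_one.1 h
  have hmem : ∀ z, z ∈ ({a, b} : Finset α) ∧ z ∈ ({c, d} : Finset α) ↔ z = r := fun z => by
    rw [← Finset.mem_inter, hr, Finset.mem_singleton]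
  simp only [Finset.mem_insert, Finset.mem_singleton] at hmem
  rcases (hmem r).2 rfl with ⟨rfl | rfl, rfl | rfl⟩
  · exact ⟨r, b, d, hab, hcd, fun h => hab ((hmem b).1 (by simp [h])).symm, rfl, rfl⟩
  · exact ⟨r, b, c, hab, hcd.symm, fun h => hab ((hmem b).1 (by simp [h])).symm, rfl,
      Finset.pair_comm _ _⟩
  · exact ⟨r, a, d, hab.symm, hcd, fun h => hab ((hmem a).1 (by simp [h])),
      Finset.pair_comm _ _, rfl⟩
  · exact ⟨r, a, c, hab.symm, hcd.symm, fun h => hab ((hmem a).1 (by simp [h])),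
      Finset.pair_comm _ _, Finset.pair_comm _ _⟩

def bernoulliWeight (p : ℝ) (x : ZMod 2) : ℝ := if x = 1 then p else 1 - p

def bernoulliExpect (p : ℝ) {ι : Type*} [Fintype ι] [DecidableEq ι]
    (F : (ι → ZMod 2) → ℝ) : ℝ :=
  ∑ v, F v * ∏ i, bernoulliWeight p (v i)

section BernoulliExpect

variable (p : ℝ) {ι κ : Type*} [Fintype ι] [DecidableEq ι] [Fintype κ] [DecidableEq κ]

theorem sum_bernoulliWeight : ∑ x, bernoulliWeight p x = 1 := by
  rw [show (Finset.univ : Finset (ZMod 2)) = {0, 1} from rfl, Finset.sum_pair (by decide)]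
  simp [bernoulliWeight]

theorem bernoulliExpect_const (a : ℝ) : bernoulliExpect p (fun _ : ι → ZMod 2 => a) = a := by
  rw [bernoulliExpect, ← Finset.mul_sum, ← Fintype.prod_sum]
  simp [sum_bernoulliWeight]

theorem bernoulliExpect_comp_equiv (e : ι ≃ κ) (F : (κ → ZMod 2) → ℝ) :
    bernoulliExpect p (fun v => F (v ∘ e.symm)) = bernoulliExpect p F := by
  refine Fintype.sum_equiv (e.arrowCongr (Equiv.refl _)) _ _ fun v => ?_
  change F (v ∘ e.symm) * _ = F (v ∘ e.symm) * _
  rw [← e.prod_comp]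
  simp

theorem bernoulliExpect_sumElim_mul (f : (ι → ZMod 2) → ℝ) (g : (κ → ZMod 2) → ℝ) :
    bernoulliExpect p (fun v : ι ⊕ κ → ZMod 2 => f (v ∘ Sum.inl) * g (v ∘ Sum.inr)) =
      bernoulliExpect p f * bernoulliExpect p g := by
  rw [bernoulliExpect, ← (Equiv.sumArrowEquivProdArrow ι κ _).symm.sum_comp,
    Fintype.sum_prod_type, bernoulliExpect, bernoulliExpect, Finset.sum_mul_sum]
  refine Finset.sum_congr rfl fun a _ => Finset.sum_congr rfl fun b _ => ?_
  rw [Fintype.prod_sum_type]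
  change f a * g b * ((∏ i, bernoulliWeight p (a i)) * ∏ i, bernoulliWeight p (b i)) = _
  ring

theorem bernoulliExpect_comp_of_injective {q : ι → κ} (hq : q.Injective)
    (F : (ι → ZMod 2) → ℝ) : bernoulliExpect p (fun v => F (v ∘ q)) = bernoulliExpect p F := by
  let e : ι ⊕ {k // k ∉ Set.range q} ≃ κ :=
    ((Equiv.ofInjective q hq).sumCongr (Equiv.refl _)).trans (Equiv.sumCompl _)
  have he : ∀ i, e.symm (q i) = Sum.inl i := fun i => e.symm_apply_eq.2 (by simp [e])
  have split := bernoulliExpect_sumElim_mul p F fun _ : {k // k ∉ Set.range q} → ZMod 2 => 1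
  rw [bernoulliExpect_const, mul_one] at split
  rw [← bernoulliExpect_comp_equiv p e, ← split]
  congr 1
  funext v
  rw [mul_one]
  congr 1
  funext i
  simp [he]

theorem bernoulliExpect_fin_zero (F : (Fin 0 → ZMod 2) → ℝ) : bernoulliExpect p F = F ![] := by
  simp only [bernoulliExpect, Finset.univ_unique, Finset.univ_eq_empty, Finset.prod_empty,
    mul_one, Finset.sum_singleton]
  rfl

theorem bernoulliExpect_fin_succ {n : ℕ} (F : (Fin (n + 1) → ZMod 2) → ℝ) :
    bernoulliExpect p F =
      ∑ x, bernoulliWeight p x * bernoulliExpect p (fun v => F (Fin.cons x v)) := by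
  rw [bernoulliExpect, ← (Fin.consEquiv fun _ => ZMod 2).sum_comp, Fintype.sum_prod_type]
  refine Finset.sum_congr rfl fun x _ => ?_
  rw [bernoulliExpect, Finset.mul_sum]
  refine Finset.sum_congr rfl fun v _ => ?_
  rw [Fin.prod_univ_succ]
  change F (Fin.cons x v) * (bernoulliWeight p x * ∏ i, bernoulliWeight p (v i)) = _
  ring

theorem bernoulliExpect_append {m n : ℕ} (f : (Fin m → ZMod 2) → ℝ)
    (g : (Fin n → ZMod 2) → ℝ) :
    bernoulliExpect p (fun v => f (v ∘ Fin.castAdd n) * g (v ∘ Fin.natAdd m)) =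
      bernoulliExpect p f * bernoulliExpect p g := by
  rw [← bernoulliExpect_comp_equiv p finSumFinEquiv, ← bernoulliExpect_sumElim_mul]
  congr 1
  funext v
  congr 1 <;> congr 1 <;> funext i <;> simp

end BernoulliExpect

theorem bernoulliExpect_isUnit {p : ℝ} (hp : p ^ 2 = 1 / 2) (x : ZMod 2) :
    bernoulliExpect p (fun a : Fin 3 → ZMod 2 => if IsUnit !![x, a 0; a 1, a 2] then 1 else 0) =
      1 / 2 := by
  have univ_eq : (Finset.univ : Finset (ZMod 2)) = {0, 1} := rfl
  simp only [bernoulliExpect_fin_succ, bernoulliExpect_fin_zero, univ_eq,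
    Finset.sum_pair (show (0 : ZMod 2) ≠ 1 by decide), Matrix.isUnit_iff_isUnit_det,
    Matrix.det_fin_two_of, isUnit_iff_ne_zero]
  rcases (by decide : ∀ y : ZMod 2, y = 0 ∨ y = 1) x with rfl | rfl <;>
    simp +decide only [bernoulliWeight, if_true, if_false] <;> ring_nf
  · exact hp
  · linear_combination (1 - 2 * p) * hp

theorem eventProb_eq_bernoulliExpect (s : ℕ) (p : ℝ)
    (E : Matrix (Fin s) (Fin s) (ZMod 2) → Prop) :
    eventProb s p E = bernoulliExpect p fun g : Fin s × Fin s → ZMod 2 =>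
      if E (Matrix.of fun i j => g (i, j)) then 1 else 0 := by
  rw [eventProb, Finset.sum_filter]
  refine Fintype.sum_equiv (Equiv.curry _ _ _).symm _ _ fun M => ?_
  change _ = (if E M then 1 else 0) * ∏ i : Fin s × Fin s, bernoulliWeight p (M i.1 i.2)
  rw [boole_mul, Fintype.prod_prod_type' fun i j => bernoulliWeight p (M i j)]
  rfl

theorem isUnit_sub2_iff {s : ℕ} (M : Matrix (Fin s) (Fin s) (ZMod 2)) (i j k l : Fin s) :
    IsUnit (sub2 M i j k l) ↔ M i k * M j l ≠ M i l * M j k := by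
  rw [Matrix.isUnit_iff_isUnit_det, sub2, Matrix.det_fin_two_of, isUnit_iff_ne_zero, sub_ne_zero]

theorem isUnit_sub2_congr {s : ℕ} (M : Matrix (Fin s) (Fin s) (ZMod 2))
    {i j k l i' j' k' l' : Fin s} (hrow : ({i, j} : Finset (Fin s)) = {i', j'})
    (hcol : ({k, l} : Finset (Fin s)) = {k', l'}) :
    IsUnit (sub2 M i j k l) ↔ IsUnit (sub2 M i' j' k' l') := by
  rw [isUnit_sub2_iff, isUnit_sub2_iff]
  rcases Finset.pair_eq_pair_iff.1 hrow with ⟨rfl, rfl⟩ | ⟨rfl, rfl⟩ <;>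
    rcases Finset.pair_eq_pair_iff.1 hcol with ⟨rfl, rfl⟩ | ⟨rfl, rfl⟩ <;> grind

section SharedCorner

variable {s : ℕ} (p : ℝ) {r r₁ r₂ c c₁ c₂ : Fin s}

theorem eventProb_sub2 (hr : r ≠ r₁) (hc : c ≠ c₁)
    (P : Matrix (Fin 2) (Fin 2) (ZMod 2) → Prop) [DecidablePred P] :
    eventProb s p (fun M => P (sub2 M r r₁ c c₁)) = ∑ x, bernoulliWeight p x *
      bernoulliExpect p (fun a : Fin 3 → ZMod 2 => if P !![x, a 0; a 1, a 2] then 1 else 0) := by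
  have hq : (![(r, c), (r, c₁), (r₁, c), (r₁, c₁)] : Fin 4 → Fin s × Fin s).Injective := by
    intro i j h
    fin_cases i <;> fin_cases j <;> simp_all [Prod.ext_iff, eq_comm]
  rw [eventProb_eq_bernoulliExpect]
  refine Eq.trans ?_ ((bernoulliExpect_comp_of_injective p hq
    (fun v => if P !![v 0, v 1; v 2, v 3] then 1 else 0)).trans (bernoulliExpect_fin_succ p _))
  congr! 3

theorem eventProb_sub2_and_sub2 (hr₁ : r ≠ r₁) (hr₂ : r ≠ r₂) (hr : r₁ ≠ r₂)
    (hc₁ : c ≠ c₁) (hc₂ : c ≠ c₂) (hc : c₁ ≠ c₂)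
    (P Q : Matrix (Fin 2) (Fin 2) (ZMod 2) → Prop) [DecidablePred P] [DecidablePred Q] :
    eventProb s p (fun M => P (sub2 M r r₁ c c₁) ∧ Q (sub2 M r r₂ c c₂)) =
      ∑ x, bernoulliWeight p x *
        (bernoulliExpect p (fun a : Fin 3 → ZMod 2 => if P !![x, a 0; a 1, a 2] then 1 else 0) *
         bernoulliExpect p (fun a : Fin 3 → ZMod 2 => if Q !![x, a 0; a 1, a 2] then 1 else 0)) := by
  -- the shared entry comes first, so that conditioning on it leaves two disjoint blocks
  have hq : (![(r, c), (r, c₁), (r₁, c), (r₁, c₁), (r, c₂), (r₂, c), (r₂, c₂)] :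
      Fin 7 → Fin s × Fin s).Injective := by
    intro i j h
    fin_cases i <;> fin_cases j <;> simp_all [Prod.ext_iff, eq_comm]
  rw [eventProb_eq_bernoulliExpect]
  refine Eq.trans ?_ ((bernoulliExpect_comp_of_injective p hq
    (fun v => if P !![v 0, v 1; v 2, v 3] ∧ Q !![v 0, v 4; v 5, v 6] then 1 else 0)).trans
    ((bernoulliExpect_fin_succ p _).trans (Finset.sum_congr rfl fun x _ => ?_)))
  · congr! 3
  rw [← bernoulliExpect_append]
  congr 2
  funext a
  rw [ite_zero_mul_ite_zero, one_mul]
  rfl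

variable {p}

theorem eventProb_isUnit_sub2 (hp : p ^ 2 = 1 / 2) (hr : r ≠ r₁) (hc : c ≠ c₁) :
    eventProb s p (fun M => IsUnit (sub2 M r r₁ c c₁)) = 1 / 2 := by
  rw [eventProb_sub2 p hr hc IsUnit]
  simp only [bernoulliExpect_isUnit hp, ← Finset.sum_mul, sum_bernoulliWeight, one_mul]

theorem eventProb_isUnit_sub2_and_isUnit_sub2 (hp : p ^ 2 = 1 / 2)
    (hr₁ : r ≠ r₁) (hr₂ : r ≠ r₂) (hr : r₁ ≠ r₂) (hc₁ : c ≠ c₁) (hc₂ : c ≠ c₂) (hc : c₁ ≠ c₂) :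
    eventProb s p (fun M => IsUnit (sub2 M r r₁ c c₁) ∧ IsUnit (sub2 M r r₂ c c₂)) = 1 / 4 := by
  rw [eventProb_sub2_and_sub2 p hr₁ hr₂ hr hc₁ hc₂ hc IsUnit IsUnit]
  simp only [bernoulliExpect_isUnit hp, ← Finset.sum_mul, sum_bernoulliWeight]
  norm_num

end SharedCorner

theorem one_common_entry_independent (s : ℕ)
    (i₁ j₁ k₁ l₁ i₂ j₂ k₂ l₂ : Fin s)
    (h₁r : i₁ < j₁) (h₁c : k₁ < l₁) (h₂r : i₂ < j₂) (h₂c : k₂ < l₂)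
    (hrow : (({i₁, j₁} : Finset (Fin s)) ∩ {i₂, j₂}).card = 1)
    (hcol : (({k₁, l₁} : Finset (Fin s)) ∩ {k₂, l₂}).card = 1) :
    eventProb s (Real.sqrt 2 / 2)
        (fun M => IsUnit (sub2 M i₁ j₁ k₁ l₁) ∧ IsUnit (sub2 M i₂ j₂ k₂ l₂)) =
      eventProb s (Real.sqrt 2 / 2) (fun M => IsUnit (sub2 M i₁ j₁ k₁ l₁)) *
        eventProb s (Real.sqrt 2 / 2) (fun M => IsUnit (sub2 M i₂ j₂ k₂ l₂)) ∧
    eventProb s (Real.sqrt 2 / 2) (fun M => IsUnit (sub2 M i₁ j₁ k₁ l₁)) = 1 / 2 ∧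
    eventProb s (Real.sqrt 2 / 2) (fun M => IsUnit (sub2 M i₂ j₂ k₂ l₂)) = 1 / 2 := by
  obtain ⟨r, r₁, r₂, hr₁, hr₂, hr, hrow₁, hrow₂⟩ :=
    exists_eq_pair_of_card_inter_eq_one h₁r.ne h₂r.ne hrow
  obtain ⟨c, c₁, c₂, hc₁, hc₂, hc, hcol₁, hcol₂⟩ :=
    exists_eq_pair_of_card_inter_eq_one h₁c.ne h₂c.ne hcol
  have hp : (Real.sqrt 2 / 2) ^ 2 = 1 / 2 := by
    rw [div_pow, Real.sq_sqrt zero_le_two]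
    norm_num
  simp only [isUnit_sub2_congr _ hrow₁ hcol₁, isUnit_sub2_congr _ hrow₂ hcol₂,
    eventProb_isUnit_sub2_and_isUnit_sub2 hp hr₁ hr₂ hr hc₁ hc₂ hc,
    eventProb_isUnit_sub2 hp hr₁ hc₁, eventProb_isUnit_sub2 hp hr₂ hc₂]
  norm_num
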